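/- Assume F ⊆ Hom(S¹) and that the collection K_F of F-invariant minimal sets is finite. Let K₁, K₂ ∈ K_F, y₁ ∈ K₁ and x₂ ∈ K₂ be such that the open arc (y₁,x₂) is disjoint from every K ∈ K_F. Then for every f ∈ F and every K ∈ K_F \ {K₁,K₂}, one has f([y₁,x₂]) ∩ K = ∅. -/

import Mathlib

open MeasureTheory Set Function Filter Topology
open scoped ENNReal NNReal

noncomputable section

/-- The circle, modeled as `ℝ/ℤ`, with its (arc-length) quotient metric. -/
abbrev S1 : Type := AddCircle (1 : ℝ)

/-- The representative in `[0,1)` of a point of the circle. -/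
def argS1 (x : S1) : ℝ := (AddCircle.equivIco 1 0 x : ℝ)

/-- The open arc traversed counterclockwise from `a` to `b`. -/
def openArc (a b : S1) : Set S1 := {x | 0 < argS1 (x - a) ∧ argS1 (x - a) < argS1 (b - a)}

/-- The closed arc traversed counterclockwise from `a` to `b`; note `[a,a] = {a}`. -/
def closedArc (a b : S1) : Set S1 := insert a (insert b (openArc a b))

/-- Homeomorphisms of the circle. -/
abbrev HomS1 : Type := S1 ≃ₜ S1

/-- A circle homeomorphism is orientation preserving if it maps counterclockwise open
arcs onto counterclockwise open arcs. -/
def OrientationPreserving (f : HomS1) : Prop :=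
  ∀ a b : S1, f '' openArc a b = openArc (f a) (f b)

/-- Membership in the semigroup generated by `F` (all finite compositions of members). -/
inductive InSemigroup (F : Set HomS1) : HomS1 → Prop
  | base : ∀ f ∈ F, InSemigroup F f
  | comp : ∀ f g : HomS1, InSemigroup F f → InSemigroup F g → InSemigroup F (g.trans f)

/-- The semigroup `G_F` generated by `F`, as a set of homeomorphisms. -/
def semigroupOf (F : Set HomS1) : Set HomS1 := {g | InSemigroup F g}

/-- The orbit of `x` under the semigroup generated by `F`. -/
def orbitOf (F : Set HomS1) (x : S1) : Set S1 := {y | ∃ g ∈ semigroupOf F, g x = y}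

/-- The semigroup generated by `F` has no finite orbit. -/
def NoFiniteOrbit (F : Set HomS1) : Prop := ∀ x : S1, (orbitOf F x).Infinite

/-- A set `K` is `F`-invariant if every `f ∈ F` maps it into itself. -/
def InvariantUnder (F : Set HomS1) (K : Set S1) : Prop := ∀ f ∈ F, f '' K ⊆ K

/-- A nonempty closed `F`-invariant set having no nonempty closed `F`-invariant
proper subset. -/
def IsMinimalInvariant (F : Set HomS1) (K : Set S1) : Prop :=
  K.Nonempty ∧ IsClosed K ∧ InvariantUnder F K ∧
    ∀ K' ⊆ K, K'.Nonempty → IsClosed K' → InvariantUnder F K' → K' = K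

/-- The collection `K_F` of `F`-invariant minimal sets. -/
def minimalSets (F : Set HomS1) : Set (Set S1) := {K | IsMinimalInvariant F K}

/-- The semigroup generated by `F` acts proximally on `I`. -/
def ProximalOn (F : Set HomS1) (I : Set S1) : Prop :=
  ∀ x ∈ I, ∀ y ∈ I, ∃ g : ℕ → HomS1, (∀ n, g n ∈ semigroupOf F) ∧
    Tendsto (fun n => dist (g n x) (g n y)) atTop (𝓝 0)

/-- `L` is a finite union of closed arcs with endpoints in `K`. -/
def FiniteUnionOfArcsWithEndsIn (K L : Set S1) : Prop :=
  ∃ (n : ℕ) (a b : Fin n → S1), (∀ k, a k ∈ K) ∧ (∀ k, b k ∈ K) ∧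
    L = ⋃ k, closedArc (a k) (b k)

/-- `L` is a finite union of closed arcs. -/
def FiniteUnionOfClosedArcs (L : Set S1) : Prop :=
  ∃ (n : ℕ) (a b : Fin n → S1), L = ⋃ k, closedArc (a k) (b k)

/-- The number of connected components of `L ⊆ S¹`. -/
def numComponents (L : Set S1) : ℕ :=
  {C : Set S1 | ∃ x ∈ L, C = connectedComponentIn L x}.ncard

/-- `x` precedes `y` in the counterclockwise order of an arc starting at `a`. -/
def arcLE (a x y : S1) : Prop := argS1 (x - a) ≤ argS1 (y - a)

/-- `u` is monotone increasing on the closed arc `[a,b]` (counterclockwise order). -/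
def MonotoneIncrOnArc (u : S1 → ℝ) (a b : S1) : Prop :=
  ∀ x ∈ closedArc a b, ∀ y ∈ closedArc a b, arcLE a x y → u x ≤ u y

/-- `u` is monotone decreasing on the closed arc `[a,b]` (counterclockwise order). -/
def MonotoneDecrOnArc (u : S1 → ℝ) (a b : S1) : Prop :=
  ∀ x ∈ closedArc a b, ∀ y ∈ closedArc a b, arcLE a x y → u y ≤ u x

/-- A closed arc with endpoints in the minimal set `K` and disjoint from every other
minimal set of `F`. -/
def IsGapArc (F : Set HomS1) (K I : Set S1) : Prop :=
  (∃ x ∈ K, ∃ y ∈ K, I = closedArc x y) ∧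
    ∀ K' ∈ minimalSets F, K' ≠ K → I ∩ K' = ∅

/-- The family `E_K`: the maximal closed arcs with endpoints in `K` whose union is
disjoint from every other minimal set. -/
def EK (F : Set HomS1) (K : Set S1) : Set (Set S1) :=
  {I | IsGapArc F K I ∧ ∀ J, IsGapArc F K J → I ⊆ J → J = I}

/-!
Let `ℳ` be the union of the finitely many minimal sets, which are closed and pairwise disjoint.
Call a complementary arc of `ℳ` *mixed* if its endpoints lie in different minimal sets; distinct
minimal sets are a positive distance apart, so there are only finitely many mixed gaps. Every
`f ∈ F` maps each minimal set into itself, so the image of a mixed gap is an arc whose endpoints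
lie in different minimal sets, and walking along it one finds a mixed gap inside it. This gives
an injective, hence bijective, self-map of the finite set of mixed gaps, sending each gap into its
own image; it follows that the image of any gap contains at most one mixed gap. If `f` sent a point
of `(y₁, x₂)` into a third minimal set `K`, walking along `f (y₁, x₂)` from `f y₁` to `K` and
from `K` to `f x₂` would exhibit two different mixed gaps inside it.
-/

lemma argS1_coe (r : ℝ) : argS1 r = Int.fract r := by
  unfold argS1
  simpa only [div_one, mul_one] using AddCircle.coe_equivIco_mk_apply (p := (1 : ℝ)) r

lemma coe_argS1 (x : S1) : ((argS1 x : ℝ) : S1) = x :=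
  (AddCircle.equivIco 1 0).symm_apply_apply x

lemma argS1_mem_Ico (x : S1) : argS1 x ∈ Ico (0 : ℝ) 1 := by
  simpa [argS1] using (AddCircle.equivIco 1 0 x).2

lemma argS1_coe_of_mem_Ico {t : ℝ} (ht : t ∈ Ico (0 : ℝ) 1) : argS1 t = t := by
  rw [argS1_coe, Int.fract_eq_self.2 ht]

lemma add_argS1_sub (z x : S1) : z + (argS1 (x - z) : S1) = x := by
  rw [coe_argS1, add_sub_cancel]

lemma argS1_sub (x c z : S1) :
    argS1 (x - c) = Int.fract (argS1 (x - z) - argS1 (c - z)) := by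
  rw [← argS1_coe, AddCircle.coe_sub, coe_argS1, coe_argS1, sub_sub_sub_cancel_right]

lemma injOn_add_coe (z : S1) : InjOn (fun t : ℝ => z + (t : S1)) (Ico 0 1) :=
  fun t ht t' ht' h => (AddCircle.coe_eq_coe_iff_of_mem_Ico (a := 0) (by simpa using ht)
    (by simpa using ht')).1 (add_left_cancel h)

lemma continuousAt_argS1 {x : S1} (hx : x ≠ 0) : ContinuousAt argS1 x :=
  continuous_subtype_val.continuousAt.comp
    (AddCircle.continuousAt_equivIco 1 0 (by simpa using hx))

lemma mem_image_add_coe_Ioo_iff (z x : S1) {α β : ℝ} (hα : 0 ≤ α) (hβ : β ≤ 1) :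
    x ∈ (fun t : ℝ => z + (t : S1)) '' Ioo α β ↔ α < argS1 (x - z) ∧ argS1 (x - z) < β := by
  constructor
  · rintro ⟨t, ht, rfl⟩
    rwa [add_sub_cancel_left, argS1_coe_of_mem_Ico ⟨hα.trans ht.1.le, ht.2.trans_le hβ⟩]
  · exact fun h => ⟨_, h, add_argS1_sub z x⟩

lemma openArc_eq_image_Ioo_left (a b : S1) :
    openArc a b = (fun t : ℝ => a + (t : S1)) '' Ioo 0 (argS1 (b - a)) := by
  ext x
  rw [mem_image_add_coe_Ioo_iff a x le_rfl (argS1_mem_Ico _).2.le]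
  rfl

lemma fract_sub_pos_and_lt_iff {s α γ : ℝ} (hs : s ∈ Ico (0 : ℝ) 1) (hα : 0 ≤ α) (hαγ : α ≤ γ)
    (hγ : γ ≤ 1) :
    (0 < Int.fract (s - α) ∧ Int.fract (s - α) < γ - α) ↔ (α < s ∧ s < γ) := by
  obtain ⟨hs0, hs1⟩ := hs
  rcases le_or_gt α s with h | h
  · rw [Int.fract_eq_self.2 ⟨by linarith, by linarith⟩]
    constructor <;> rintro ⟨h1, h2⟩ <;> constructor <;> linarith
  · rw [Int.fract_eq_iff.2 (⟨by linarith, by linarith, -1, by push_cast; ring⟩ :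
      0 ≤ s - α + 1 ∧ s - α + 1 < 1 ∧ ∃ k : ℤ, s - α - (s - α + 1) = k)]
    exact iff_of_false (fun h' => by linarith [h'.2]) (fun h' => by linarith [h'.1])

lemma openArc_eq_image_Ioo (c d z : S1) {γ : ℝ} (hcγ : argS1 (c - z) ≤ γ) (hγ : γ ≤ 1)
    (hd : Int.fract (argS1 (d - z) - argS1 (c - z)) = γ - argS1 (c - z)) :
    openArc c d = (fun t : ℝ => z + (t : S1)) '' Ioo (argS1 (c - z)) γ := by
  ext x
  rw [mem_image_add_coe_Ioo_iff z x (argS1_mem_Ico _).1 hγ,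
    ← fract_sub_pos_and_lt_iff (argS1_mem_Ico _) (argS1_mem_Ico _).1 hcγ hγ, ← hd,
    ← argS1_sub, ← argS1_sub]
  rfl

lemma openArc_add_coe (z : S1) {α β : ℝ} (hα : 0 ≤ α) (hαβ : α < β) (hβ : β < 1) :
    openArc (z + α) (z + β) = (fun t : ℝ => z + (t : S1)) '' Ioo α β := by
  have harg : ∀ {t : ℝ}, 0 ≤ t → t < 1 → argS1 (z + t - z) = t := fun h0 h1 => by
    rw [add_sub_cancel_left, argS1_coe_of_mem_Ico ⟨h0, h1⟩]
  rw [openArc_eq_image_Ioo _ _ z (γ := β) (by rw [harg hα (hαβ.trans hβ)]; exact hαβ.le) hβ.le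
    (by rw [harg hα (hαβ.trans hβ), harg (hα.trans hαβ.le) hβ,
      Int.fract_eq_self.2 ⟨by linarith, by linarith⟩]), harg hα (hαβ.trans hβ)]

lemma ne_of_mem_openArc {a b x : S1} (hx : x ∈ openArc a b) : a ≠ b := by
  rintro rfl
  have h0 : argS1 (a - a) = 0 := by simpa using argS1_coe 0
  linarith [h0 ▸ hx.1.trans hx.2]

lemma exists_openArc_eq_image_Ioo {c d z : S1} (hcd : c ≠ d) (hz : z ∉ openArc c d) :
    ∃ α β : ℝ, 0 ≤ α ∧ α < β ∧ β ≤ 1 ∧ c = z + α ∧ d = z + β ∧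
      openArc c d = (fun t : ℝ => z + (t : S1)) '' Ioo α β := by
  have hc := (add_argS1_sub z c).symm
  have hd := (add_argS1_sub z d).symm
  obtain ⟨hα0, hα1⟩ := argS1_mem_Ico (c - z)
  obtain ⟨hδ0, hδ1⟩ := argS1_mem_Ico (d - z)
  rcases lt_trichotomy (argS1 (c - z)) (argS1 (d - z)) with h | h | h
  · exact ⟨_, _, hα0, h, hδ1.le, hc, hd, openArc_eq_image_Ioo c d z h.le hδ1.le
      (Int.fract_eq_self.2 ⟨by linarith, by linarith⟩)⟩
  · exact absurd (by rw [hc, hd, h]) hcd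
  · -- `z ∉ (c, d)` forces `d = z`
    have hfract : ∀ r : ℝ, 0 ≤ r → r < argS1 (c - z) →
        Int.fract (r - argS1 (c - z)) = r - argS1 (c - z) + 1 :=
      fun r hr0 hr => Int.fract_eq_iff.2 ⟨by linarith, by linarith, -1, by push_cast; ring⟩
    have hzz : argS1 (z - z) = 0 := by simpa using argS1_coe 0
    have hδ : argS1 (d - z) = 0 := by
      by_contra hδ
      have hzc : argS1 (z - c) = 1 - argS1 (c - z) := by
        rw [argS1_sub _ c z, hzz, hfract 0 le_rfl (hδ0.trans_lt h)]; ring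
      refine hz ⟨?_, ?_⟩
      · rw [hzc]; linarith
      · rw [hzc, argS1_sub d c z, hfract _ hδ0 h]
        linarith [lt_of_le_of_ne hδ0 (Ne.symm hδ)]
    refine ⟨_, 1, hα0, hα1, le_rfl, hc, ?_, openArc_eq_image_Ioo c d z hα1.le le_rfl ?_⟩
    · rw [AddCircle.coe_period, add_zero, ← sub_eq_zero, ← coe_argS1 (d - z), hδ]; simp
    · rw [hδ, hfract 0 le_rfl (hδ0.trans_lt h)]; ring

def IsGap (ℳ T : Set S1) : Prop :=
  T.Nonempty ∧ Disjoint T ℳ ∧ ∃ a ∈ ℳ, ∃ b ∈ ℳ, T = openArc a b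

lemma IsGap.eq_or_disjoint {ℳ T T' : Set S1} (hT : IsGap ℳ T) (hT' : IsGap ℳ T') :
    T = T' ∨ Disjoint T T' := by
  obtain ⟨-, hTℳ, a, ha, b, hb, rfl⟩ := hT
  obtain ⟨-, hT'ℳ, a', ha', b', hb', rfl⟩ := hT'
  refine or_iff_not_imp_right.2 fun hnd => ?_
  obtain ⟨x, hx, hx'⟩ := not_disjoint_iff.1 hnd
  -- in the chart based at `a` both arcs are intervals, neither containing an endpoint of the other
  obtain ⟨α', β', hα', hα'β', hβ', rfl, rfl, hT'⟩ :=
    exists_openArc_eq_image_Ioo (ne_of_mem_openArc hx') (disjoint_right.1 hT'ℳ ha)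
  have hT := openArc_eq_image_Ioo_left a b
  rw [hT'] at hx' ⊢
  rw [hT] at hx ⊢
  obtain ⟨t, ht, rfl⟩ := hx
  obtain ⟨t', ht', htt'⟩ := hx'
  have hβ := argS1_mem_Ico (b - a)
  obtain rfl : t' = t := injOn_add_coe a ⟨hα'.trans ht'.1.le, ht'.2.trans_le hβ'⟩
    ⟨ht.1.le, ht.2.trans hβ.2⟩ htt'
  have h₁ : α' ∉ Ioo 0 (argS1 (b - a)) := fun h =>
    disjoint_left.1 hTℳ (hT ▸ mem_image_of_mem _ h) ha'
  have h₂ : argS1 (b - a) ∉ Ioo α' β' := fun h =>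
    disjoint_left.1 hT'ℳ (by rw [hT', ← add_argS1_sub a b]; exact mem_image_of_mem _ h) hb
  have h₃ : β' ∉ Ioo 0 (argS1 (b - a)) := fun h =>
    disjoint_left.1 hTℳ (hT ▸ mem_image_of_mem _ h) hb'
  simp only [mem_Ioo, not_and_or, not_lt] at h₁ h₂ h₃ ht ht'
  have : α' = 0 := by rcases h₁ with h | h <;> linarith
  have : β' = argS1 (b - a) := by rcases h₂ with h | h <;> rcases h₃ with h' | h' <;> linarith
  subst_vars
  rfl

lemma dist_le_argS1_sub (a b : S1) : dist a b ≤ argS1 (b - a) := by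
  have h := AddCircle.norm_eq (p := 1) (x := argS1 (b - a))
  rw [coe_argS1] at h
  rw [dist_comm, dist_eq_norm, h]
  simpa [abs_of_nonneg (argS1_mem_Ico (b - a)).1] using round_le (argS1 (b - a)) 0

lemma exists_coe_div_mem_openArc {a b : S1} {n : ℕ} (hn : 1 < n * dist a b) :
    ∃ k ≤ n, ((k / n : ℝ) : S1) ∈ openArc a b := by
  -- the first point of the grid `(1 / n) ℤ` after `a`
  obtain ⟨hr0, hr1⟩ := argS1_mem_Ico a
  have hn0 : (0 : ℝ) < n := Nat.cast_pos.2 (Nat.pos_of_ne_zero fun h => by norm_num [h] at hn)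
  have hk0 := Nat.lt_floor_add_one (argS1 a * n)
  have hk1 := Nat.floor_le (mul_nonneg hr0 hn0.le)
  have hd0 : 0 < ((⌊argS1 a * n⌋₊ + 1 : ℕ) / n : ℝ) - argS1 a := by
    rw [sub_pos, lt_div_iff₀ hn0]; exact_mod_cast hk0
  have hd1 : ((⌊argS1 a * n⌋₊ + 1 : ℕ) / n : ℝ) - argS1 a < dist a b := by
    rw [sub_lt_iff_lt_add, div_lt_iff₀ hn0]; push_cast; nlinarith
  refine ⟨⌊argS1 a * n⌋₊ + 1, (Nat.floor_lt (mul_nonneg hr0 hn0.le)).2 (by nlinarith), ?_⟩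
  have hdb := (dist_le_argS1_sub a b).trans_lt (argS1_mem_Ico (b - a)).2
  have hx : (((⌊argS1 a * n⌋₊ + 1 : ℕ) / n : ℝ) : S1) - a =
      (((⌊argS1 a * n⌋₊ + 1 : ℕ) / n - argS1 a : ℝ) : S1) := by
    rw [AddCircle.coe_sub, coe_argS1]
  show 0 < argS1 (_ - a) ∧ argS1 (_ - a) < argS1 (b - a)
  rw [hx, argS1_coe_of_mem_Ico ⟨hd0.le, by linarith⟩]
  exact ⟨hd0, hd1.trans_le (dist_le_argS1_sub a b)⟩

lemma Set.PairwiseDisjoint.finite_of_forall_inter_nonempty {α : Type*} {𝒯 : Set (Set α)}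
    {P : Set α} (hdisj : 𝒯.PairwiseDisjoint id) (hP : P.Finite)
    (hmeet : ∀ T ∈ 𝒯, (T ∩ P).Nonempty) : 𝒯.Finite := by
  refine (hP.biUnion fun x _ => (?_ : {T | T ∈ 𝒯 ∧ x ∈ T}.Subsingleton).finite).subset ?_
  · rintro T ⟨hT, hxT⟩ T' ⟨hT', hxT'⟩
    exact hdisj.elim hT hT' (not_disjoint_iff.2 ⟨x, hxT, hxT'⟩)
  · intro T hT
    obtain ⟨x, hxT, hxP⟩ := hmeet T hT
    exact mem_biUnion hxP ⟨hT, hxT⟩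

lemma finite_isGap_of_lt_dist (ℳ : Set S1) {r : ℝ} (hr : 0 < r) :
    {T | IsGap ℳ T ∧ ∃ a b, r < dist a b ∧ T = openArc a b}.Finite := by
  obtain ⟨n, hn⟩ := exists_nat_gt r⁻¹
  refine PairwiseDisjoint.finite_of_forall_inter_nonempty
    (fun T hT T' hT' hne => (hT.1.eq_or_disjoint hT'.1).resolve_left hne)
    ((finite_Iic n).image fun k : ℕ => ((k / n : ℝ) : S1)) ?_
  rintro T ⟨-, a, b, hab, rfl⟩
  obtain ⟨k, hk, hkT⟩ := exists_coe_div_mem_openArc (a := a) (b := b) (n := n) (calc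
    (1 : ℝ) = r⁻¹ * r := (inv_mul_cancel₀ hr.ne').symm
    _ < n * dist a b := mul_lt_mul hn hab.le hr (by positivity))
  exact ⟨_, hkT, k, hk, rfl⟩

lemma finite_isGap_of_disjoint (ℳ : Set S1) {M N : Set S1} (hM : IsClosed M) (hN : IsClosed N)
    (hMN : Disjoint M N) : {T | IsGap ℳ T ∧ ∃ a ∈ M, ∃ b ∈ N, T = openArc a b}.Finite := by
  obtain ⟨r, hr, hsep⟩ := Metric.exists_pos_forall_lt_edist hM.isCompact hN hMN
  refine (finite_isGap_of_lt_dist ℳ (NNReal.coe_pos.2 hr)).subset ?_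
  rintro T ⟨hT, a, ha, b, hb, rfl⟩
  exact ⟨hT, a, b, by simpa [edist_dist] using hsep a ha b hb, rfl⟩

def IsMixedGap (MS : Set (Set S1)) (T : Set S1) : Prop :=
  IsGap (⋃₀ MS) T ∧ ∃ M ∈ MS, ∃ N ∈ MS, M ≠ N ∧ ∃ a ∈ M, ∃ b ∈ N, T = openArc a b

lemma finite_isMixedGap {MS : Set (Set S1)} (hfin : MS.Finite) (hclosed : ∀ M ∈ MS, IsClosed M)
    (hdisj : MS.PairwiseDisjoint id) : {T | IsMixedGap MS T}.Finite := by
  refine (hfin.biUnion fun M hM => (hfin.sdiff (t := {M})).biUnion fun N hN =>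
    finite_isGap_of_disjoint (⋃₀ MS) (hclosed M hM) (hclosed N hN.1)
      (hdisj hM hN.1 (Ne.symm hN.2))).subset ?_
  rintro T ⟨hT, M, hM, N, hN, hMN, a, ha, b, hb, rfl⟩
  simp only [mem_iUnion]
  exact ⟨M, hM, N, ⟨hN, hMN.symm⟩, hT, a, ha, b, hb, rfl⟩

lemma homeomorph_image_Ioo_eq_openArc (f : S1 ≃ₜ S1) (z : S1) {v u : ℝ} (hv : 0 ≤ v)
    (hvu : v < u) (hu : u < 1) :
    (fun t : ℝ => f (z + t)) '' Ioo v u = openArc (f (z + v)) (f (z + u)) ∨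
      (fun t : ℝ => f (z + t)) '' Ioo v u = openArc (f (z + u)) (f (z + v)) := by
  set ψ : ℝ → S1 := fun t => f (z + t)
  have hψinj : InjOn ψ (Ico 0 1) := f.injective.comp_injOn (injOn_add_coe z)
  have hψc : Continuous ψ := f.continuous.comp (continuous_const.add continuous_quotient_mk')
  have hIcc : Icc v u ⊆ Ico 0 1 := Icc_subset_Ico hv hu
  -- read `ψ` in the chart based at a point `y` outside `ψ '' [v, u]`
  set y := ψ ((u + 1) / 2)
  set h : ℝ → ℝ := fun t => argS1 (ψ t - y)
  have hne : ∀ t ∈ Icc v u, ψ t - y ≠ 0 := fun t ht h0 =>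
    (show t ≠ (u + 1) / 2 by linarith [ht.2])
      (hψinj (hIcc ht) ⟨by linarith, by linarith⟩ (sub_eq_zero.1 h0))
  have hψ : ∀ t, y + (h t : S1) = ψ t := fun t => add_argS1_sub y (ψ t)
  have hcont : ContinuousOn h (Icc v u) := fun t ht =>
    ((continuousAt_argS1 (hne t ht)).comp (f := fun t => ψ t - y)
      (hψc.sub continuous_const).continuousAt).continuousWithinAt
  have hinj : InjOn h (Icc v u) := fun t ht t' ht' he =>
    hψinj (hIcc ht) (hIcc ht') (by rw [← hψ, ← hψ]; exact congrArg _ (congrArg _ he))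
  have himage : ψ '' Ioo v u = (fun s : ℝ => y + (s : S1)) '' (h '' Ioo v u) := by
    rw [image_image]; simp only [hψ]
  have hh : ∀ t, h t ∈ Ico 0 1 := fun t => argS1_mem_Ico _
  rcases lt_or_gt_of_ne (hinj.ne (left_mem_Icc.2 hvu.le) (right_mem_Icc.2 hvu.le) hvu.ne)
    with hlt | hgt
  · left
    rw [himage, hcont.image_Ioo_of_strictMonoOn hvu.le
      (hcont.strictMonoOn_of_injOn_Icc hvu.le hlt.le hinj),
      ← openArc_add_coe y (hh v).1 hlt (hh u).2, hψ, hψ]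
  · right
    rw [himage, hcont.image_Ioo_of_strictAntiOn hvu.le
      (hcont.strictAntiOn_of_injOn_Icc hvu.le hgt.le hinj),
      ← openArc_add_coe y (hh u).1 hgt (hh v).2, hψ, hψ]

lemma exists_crossing_subinterval {X : Type*} [TopologicalSpace X] {ψ : ℝ → X}
    (hψ : Continuous ψ) {A B : Set X} (hA : IsClosed A) (hB : IsClosed B) (hAB : Disjoint A B)
    {p q : ℝ} (hpq : p ≤ q) (hp : ψ p ∈ A) (hq : ψ q ∈ B) :
    ∃ v u, p ≤ v ∧ v < u ∧ u ≤ q ∧ ψ v ∈ A ∧ ψ u ∈ B ∧ Disjoint (ψ '' Ioo v u) (A ∪ B) := by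
  -- `u` is the first visit to `B`, `v` the last visit to `A` before it
  have hSB : IsCompact (ψ ⁻¹' B ∩ Icc p q) := isCompact_Icc.inter_left (hB.preimage hψ)
  have hu := hSB.sInf_mem ⟨q, hq, hpq, le_rfl⟩
  set u := sInf (ψ ⁻¹' B ∩ Icc p q)
  have hSA : IsCompact (ψ ⁻¹' A ∩ Icc p u) := isCompact_Icc.inter_left (hA.preimage hψ)
  have hv := hSA.sSup_mem ⟨p, hp, le_rfl, hu.2.1⟩
  set v := sSup (ψ ⁻¹' A ∩ Icc p u)
  refine ⟨v, u, hv.2.1, hv.2.2.lt_of_ne fun h => hAB.ne_of_mem hv.1 hu.1 (congrArg ψ h),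
    hu.2.2, hv.1, hu.1, disjoint_left.2 ?_⟩
  rintro _ ⟨t, ⟨hvt, htu⟩, rfl⟩ (htA | htB)
  · exact (le_csSup hSA.bddAbove ⟨htA, hv.2.1.trans hvt.le, htu.le⟩).not_gt hvt
  · exact (csInf_le hSB.bddBelow ⟨htB, hv.2.1.trans hvt.le, htu.le.trans hu.2.2⟩).not_gt htu

lemma exists_isMixedGap_image_Ioo {MS : Set (Set S1)} (hfin : MS.Finite)
    (hclosed : ∀ M ∈ MS, IsClosed M) (hdisj : MS.PairwiseDisjoint id) (𝒜 : Set (Set S1))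
    (f : S1 ≃ₜ S1) (z : S1) {p q : ℝ} (hp0 : 0 ≤ p) (hpq : p ≤ q) (hq1 : q < 1)
    (hp : f (z + p) ∈ ⋃₀ (MS ∩ 𝒜)) (hq : f (z + q) ∈ ⋃₀ (MS \ 𝒜)) :
    ∃ v u, p ≤ v ∧ v < u ∧ u ≤ q ∧ IsMixedGap MS ((fun t : ℝ => f (z + t)) '' Ioo v u) := by
  have hclosed' : ∀ 𝒮 ⊆ MS, IsClosed (⋃₀ 𝒮) := fun 𝒮 h𝒮 =>
    sUnion_eq_biUnion (s := 𝒮) ▸ (hfin.subset h𝒮).isClosed_biUnion fun M hM => hclosed M (h𝒮 hM)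
  have hAB : Disjoint (⋃₀ (MS ∩ 𝒜)) (⋃₀ (MS \ 𝒜)) :=
    disjoint_sUnion_left.2 fun M hM => disjoint_sUnion_right.2 fun N hN =>
      hdisj hM.1 hN.1 fun h => hN.2 (h ▸ hM.2)
  obtain ⟨v, u, hpv, hvu, huq, ⟨M, ⟨hM, hM𝒜⟩, hvM⟩, ⟨N, ⟨hN, hN𝒜⟩, huN⟩, hmid⟩ :=
    exists_crossing_subinterval (f.continuous.comp (continuous_const.add continuous_quotient_mk'))
      (hclosed' _ inter_subset_left) (hclosed' _ sdiff_subset) hAB hpq hp hq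
  have hMN : M ≠ N := fun h => hN𝒜 (h ▸ hM𝒜)
  have hne : ((fun t : ℝ => f (z + t)) '' Ioo v u).Nonempty := (nonempty_Ioo.2 hvu).image _
  have hgap : Disjoint ((fun t : ℝ => f (z + t)) '' Ioo v u) (⋃₀ MS) :=
    hmid.mono_right (by rw [← sUnion_union, inter_union_sdiff])
  refine ⟨v, u, hpv, hvu, huq, ?_⟩
  rcases homeomorph_image_Ioo_eq_openArc f z (hp0.trans hpv) hvu (huq.trans_lt hq1) with h | h <;>
    rw [h] at hne hgap ⊢
  · exact ⟨⟨hne, hgap, _, ⟨M, hM, hvM⟩, _, ⟨N, hN, huN⟩, rfl⟩, M, hM, N, hN, hMN, _, hvM, _, huN,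
      rfl⟩
  · exact ⟨⟨hne, hgap, _, ⟨N, hN, huN⟩, _, ⟨M, hM, hvM⟩, rfl⟩, N, hN, M, hM, hMN.symm, _, huN, _,
      hvM, rfl⟩

lemma IsGap.eq_of_nonempty_subset_images {ℳ W W' T : Set S1} (hW : IsGap ℳ W)
    (hW' : IsGap ℳ W') (f : S1 ≃ₜ S1) (hT : T.Nonempty) (h : T ⊆ f '' W) (h' : T ⊆ f '' W') :
    W = W' := by
  obtain ⟨x, hx⟩ := hT
  refine (hW.eq_or_disjoint hW').resolve_right fun hd => ?_
  exact ((disjoint_image_iff f.injective).2 hd).ne_of_mem (h hx) (h' hx) rfl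

lemma exists_bijOn_isMixedGap {MS : Set (Set S1)} (hfin : MS.Finite)
    (hclosed : ∀ M ∈ MS, IsClosed M) (hdisj : MS.PairwiseDisjoint id) (f : S1 ≃ₜ S1)
    (hf : ∀ M ∈ MS, MapsTo f M M) :
    ∃ g : Set S1 → Set S1, BijOn g {T | IsMixedGap MS T} {T | IsMixedGap MS T} ∧
      ∀ W, IsMixedGap MS W → g W ⊆ f '' W := by
  have hpick : ∀ W, IsMixedGap MS W → ∃ T, IsMixedGap MS T ∧ T ⊆ f '' W := by
    rintro _ ⟨-, M, hM, N, hN, hMN, a, ha, b, hb, rfl⟩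
    obtain ⟨v, u, hv, -, hu, hT⟩ := exists_isMixedGap_image_Ioo hfin hclosed hdisj {M} f a le_rfl
      (argS1_mem_Ico (b - a)).1 (argS1_mem_Ico (b - a)).2
      ⟨M, ⟨hM, rfl⟩, by simpa using hf M hM ha⟩
      ⟨N, ⟨hN, hMN.symm⟩, by rw [add_argS1_sub]; exact hf N hN hb⟩
    refine ⟨_, hT, ?_⟩
    rw [openArc_eq_image_Ioo_left, image_image]
    exact image_mono (Ioo_subset_Ioo hv hu)
  choose! g hg using hpick
  refine ⟨g, ((finite_isMixedGap hfin hclosed hdisj).injOn_iff_bijOn_of_mapsTo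
    fun W hW => (hg W hW).1).1 fun W hW W' hW' h => ?_, fun W hW => (hg W hW).2⟩
  exact hW.1.eq_of_nonempty_subset_images hW'.1 f (hg W hW).1.1.1 (hg W hW).2
    (h ▸ (hg W' hW').2)

lemma IsGap.eq_of_isMixedGap_subset_image {MS : Set (Set S1)} (hfin : MS.Finite)
    (hclosed : ∀ M ∈ MS, IsClosed M) (hdisj : MS.PairwiseDisjoint id) {f : S1 ≃ₜ S1}
    (hf : ∀ M ∈ MS, MapsTo f M M) {W T T' : Set S1} (hW : IsGap (⋃₀ MS) W)
    (hT : IsMixedGap MS T) (hT' : IsMixedGap MS T') (h : T ⊆ f '' W) (h' : T' ⊆ f '' W) :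
    T = T' := by
  obtain ⟨g, hg, hgf⟩ := exists_bijOn_isMixedGap hfin hclosed hdisj f hf
  obtain ⟨V, hV, rfl⟩ := hg.surjOn hT
  obtain ⟨V', hV', rfl⟩ := hg.surjOn hT'
  rw [hV.1.eq_of_nonempty_subset_images hW f hT.1.1 (hgf V hV) h,
    hV'.1.eq_of_nonempty_subset_images hW f hT'.1.1 (hgf V' hV') h']

lemma exists_ne_isMixedGap_subset_image {MS : Set (Set S1)} (hfin : MS.Finite)
    (hclosed : ∀ M ∈ MS, IsClosed M) (hdisj : MS.PairwiseDisjoint id) (f : S1 ≃ₜ S1)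
    (hf : ∀ M ∈ MS, MapsTo f M M) {M₁ M₂ K : Set S1} (hM₁ : M₁ ∈ MS) (hM₂ : M₂ ∈ MS)
    (hK : K ∈ MS) (hKM₁ : K ≠ M₁) (hKM₂ : K ≠ M₂) {y x w : S1} (hy : y ∈ M₁) (hx : x ∈ M₂)
    (hw : w ∈ openArc y x) (hwK : f w ∈ K) :
    ∃ T₁ T₂, IsMixedGap MS T₁ ∧ IsMixedGap MS T₂ ∧ T₁ ≠ T₂ ∧
      T₁ ⊆ f '' openArc y x ∧ T₂ ⊆ f '' openArc y x := by
  have hs1 := (argS1_mem_Ico (x - y)).2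
  rw [openArc_eq_image_Ioo_left] at hw ⊢
  obtain ⟨t, ⟨ht0, hts⟩, rfl⟩ := hw
  have hK' : K ∈ MS \ {M₁, M₂} := ⟨hK, by simp [hKM₁, hKM₂]⟩
  -- walk along `f [y, x]` from `f y` to `K`, and from `K` to `f x`
  obtain ⟨v₁, u₁, hv₁, hvu₁, hu₁, hT₁⟩ := exists_isMixedGap_image_Ioo hfin hclosed hdisj {M₁, M₂}
    f y le_rfl ht0.le (hts.trans hs1) ⟨M₁, ⟨hM₁, by simp⟩, by simpa using hf M₁ hM₁ hy⟩
    ⟨K, hK', hwK⟩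
  obtain ⟨v₂, u₂, hv₂, hvu₂, hu₂, hT₂⟩ := exists_isMixedGap_image_Ioo hfin hclosed hdisj
    {M₁, M₂}ᶜ f y ht0.le hts.le hs1 ⟨K, hK', hwK⟩
    ⟨M₂, ⟨hM₂, by simp⟩, by rw [add_argS1_sub]; exact hf M₂ hM₂ hx⟩
  refine ⟨_, _, hT₁, hT₂, fun heq => ?_, ?_, ?_⟩
  · obtain ⟨r, hr, hψr⟩ : f (y + ((v₁ + u₁) / 2 : ℝ)) ∈ (fun t : ℝ => f (y + t)) '' Ioo v₂ u₂ :=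
      heq ▸ mem_image_of_mem _ ⟨by linarith, by linarith⟩
    have := f.injective.comp_injOn (injOn_add_coe y) ⟨by linarith [hr.1], by linarith [hr.2]⟩
      ⟨by linarith, by linarith⟩ hψr
    linarith [hr.1]
  all_goals
    rw [image_image]
    exact image_mono (Ioo_subset_Ioo (by linarith) (by linarith))

theorem disjoint_image_closedArc {MS : Set (Set S1)} (hfin : MS.Finite)
    (hclosed : ∀ M ∈ MS, IsClosed M) (hdisj : MS.PairwiseDisjoint id) (f : S1 ≃ₜ S1)
    (hf : ∀ M ∈ MS, MapsTo f M M) {M₁ M₂ K : Set S1} (hM₁ : M₁ ∈ MS) (hM₂ : M₂ ∈ MS)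
    (hK : K ∈ MS) (hKM₁ : K ≠ M₁) (hKM₂ : K ≠ M₂) {y x : S1} (hy : y ∈ M₁) (hx : x ∈ M₂)
    (hgap : Disjoint (openArc y x) (⋃₀ MS)) :
    Disjoint (f '' closedArc y x) K := by
  refine disjoint_left.2 ?_
  rintro _ ⟨w, hw, rfl⟩ hwK
  have hwI : w ∈ openArc y x := by
    rcases hw with rfl | rfl | hw
    · exact absurd hwK ((hdisj hK hM₁ hKM₁).ne_of_mem · (hf M₁ hM₁ hy) rfl)
    · exact absurd hwK ((hdisj hK hM₂ hKM₂).ne_of_mem · (hf M₂ hM₂ hx) rfl)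
    · exact hw
  obtain ⟨T₁, T₂, hT₁, hT₂, hne, h₁, h₂⟩ := exists_ne_isMixedGap_subset_image hfin hclosed hdisj
    f hf hM₁ hM₂ hK hKM₁ hKM₂ hy hx hwI hwK
  have hI : IsGap (⋃₀ MS) (openArc y x) :=
    ⟨⟨w, hwI⟩, hgap, y, ⟨M₁, hM₁, hy⟩, x, ⟨M₂, hM₂, hx⟩, rfl⟩
  exact hne (hI.eq_of_isMixedGap_subset_image hfin hclosed hdisj hf hT₁ hT₂ h₁ h₂)

lemma pairwiseDisjoint_minimalSets (F : Set HomS1) : (minimalSets F).PairwiseDisjoint id := by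
  intro M hM N hN hMN
  show Disjoint M N
  by_contra h
  rw [not_disjoint_iff_nonempty_inter] at h
  have hinv : InvariantUnder F (M ∩ N) := fun f hf =>
    subset_inter ((image_mono inter_subset_left).trans (hM.2.2.1 f hf))
      ((image_mono inter_subset_right).trans (hN.2.2.1 f hf))
  have hcl := hM.2.1.inter hN.2.1
  exact hMN ((hM.2.2.2 _ inter_subset_left h hcl hinv).symm.trans
    (hN.2.2.2 _ inter_subset_right h hcl hinv))

/-- **Lemma 3.4.** Suppose the collection of `F`-invariant minimal sets is finite. Let
`K₁, K₂` be minimal sets, `y₁ ∈ K₁`, `x₂ ∈ K₂`, with the open arc `(y₁, x₂)` disjoint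
from every minimal set. Then for every `f ∈ F` and every minimal set
`K ∉ {K₁, K₂}`, one has `f([y₁, x₂]) ∩ K = ∅`. -/
theorem statement7 (F : Set HomS1) (hfin : (minimalSets F).Finite)
    (K₁ K₂ : Set S1) (hK₁ : K₁ ∈ minimalSets F) (hK₂ : K₂ ∈ minimalSets F)
    (y₁ x₂ : S1) (hy₁ : y₁ ∈ K₁) (hx₂ : x₂ ∈ K₂)
    (hgap : ∀ K ∈ minimalSets F, openArc y₁ x₂ ∩ K = ∅) :
    ∀ f ∈ F, ∀ K ∈ minimalSets F, K ≠ K₁ → K ≠ K₂ →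
      f '' closedArc y₁ x₂ ∩ K = ∅ := by
  intro f hf K hK hKK₁ hKK₂
  refine disjoint_iff_inter_eq_empty.1 (disjoint_image_closedArc hfin (fun M hM => hM.2.1)
    (pairwiseDisjoint_minimalSets F) f (fun M hM => mapsTo_iff_image_subset.2 (hM.2.2.1 f hf))
    hK₁ hK₂ hK hKK₁ hKK₂ hy₁ hx₂ ?_)
  exact disjoint_sUnion_right.2 fun M hM => disjoint_iff_inter_eq_empty.2 (hgap M hM)

end
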